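/- Let 0 < ε < 1. For Lebesgue-almost every irrational x ∈ (0,1), there exists a strictly increasing sequence of natural numbers n₁ < n₂ < n₃ < ⋯ (depending on x and ε) such that for all k, 2e^{−2F}/(1+ε) < q_{n_k+1}(x)/q_{n_k}(x) < 2e^{2F}/(1−ε), where q_n(x) are the denominators of the continued fraction convergents of x and F is the reciprocal Fibonacci constant. -/

import Mathlib

open Filter Topology Set MeasureTheory Real

/-!
Since `F ≥ 1`, the two bounds lie below `1` and above `3`, and `q_{n+1}/q_n` lies between the
partial quotient `a_{n+1}` and `a_{n+1} + 1` because `q_{n+1} = a_{n+1} q_n + q_{n-1}` with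
`q_{n-1} ≤ q_n`; so it suffices that almost every `x` has infinitely many partial quotients
`≤ 2`. These are `⌊1/Tⁿx⌋` for the Gauss map `T y = {1/y}`. On `(0, 1/c]` the map `T` has the
inverse branches `y ↦ 1/(a + c + y)`, which shrink Lebesgue measure by the factor `(a + c)⁻²`.
Summing over `a` with `c = 3`, the points whose first `m` partial quotients are all `≥ 3` have
measure `≤ 2⁻ᵐ`; with `c = 1`, `T` pulls null sets back to null sets, so the points whose
partial quotients are eventually `≥ 3` also form a null set.
-/

/-- The reciprocal Fibonacci constant `F = ∑_{n ≥ 1} 1/fib(n)`. -/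
noncomputable def recipFibConst : ℝ := ∑' n : ℕ, 1 / (Nat.fib (n + 1) : ℝ)

noncomputable def gaussMap (x : ℝ) : ℝ := Int.fract x⁻¹

lemma lipschitzOnWith_inv_add {r : ℝ} (hr : 0 < r) :
    LipschitzOnWith (Real.toNNReal (r ^ 2)⁻¹) (fun t : ℝ => (r + t)⁻¹) (Ici 0) := by
  refine LipschitzOnWith.of_dist_le_mul fun s hs t ht => ?_
  simp only [mem_Ici] at hs ht
  have hrs : 0 < r + s := by linarith
  have hrt : 0 < r + t := by linarith
  rw [Real.dist_eq, Real.dist_eq, inv_sub_inv hrs.ne' hrt.ne', abs_div,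
    abs_of_pos (mul_pos hrs hrt), show r + t - (r + s) = -(s - t) by ring, abs_neg,
    div_le_iff₀ (mul_pos hrs hrt), Real.coe_toNNReal _ (by positivity)]
  calc |s - t| = (r ^ 2)⁻¹ * |s - t| * r ^ 2 := by field_simp
    _ ≤ (r ^ 2)⁻¹ * |s - t| * ((r + s) * (r + t)) := by gcongr; nlinarith

lemma volume_image_inv_add_le {r : ℝ} (hr : 0 < r) {s : Set ℝ} (hs : s ⊆ Ici 0) :
    volume ((fun t : ℝ => (r + t)⁻¹) '' s) ≤ ENNReal.ofReal (r ^ 2)⁻¹ * volume s := by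
  have := ((lipschitzOnWith_inv_add hr).mono hs).hausdorffMeasure_image_le zero_le_one
  rwa [hausdorffMeasure_real, ENNReal.rpow_one] at this

lemma volume_Ioc_inter_gaussMap_preimage_le {c : ℕ} (hc : 0 < c) (A : Set ℝ) :
    volume (Ioc 0 (c : ℝ)⁻¹ ∩ gaussMap ⁻¹' A) ≤
      (∑' a : ℕ, ENNReal.ofReal ((a + c : ℝ) ^ 2)⁻¹) * volume A := by
  have hcover : Ioc 0 (c : ℝ)⁻¹ ∩ gaussMap ⁻¹' A ⊆
      ⋃ a : ℕ, (fun t : ℝ => ((a + c : ℝ) + t)⁻¹) '' (A ∩ Ici 0) := by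
    rintro x ⟨⟨hx0, hxc⟩, hxA⟩
    have hcx : (c : ℝ) ≤ x⁻¹ := by
      rw [le_inv_comm₀ (by positivity) hx0]; exact hxc
    have hcfloor : c ≤ ⌊x⁻¹⌋₊ := Nat.le_floor hcx
    refine mem_iUnion.2 ⟨⌊x⁻¹⌋₊ - c, gaussMap x, ⟨hxA, Int.fract_nonneg x⁻¹⟩, ?_⟩
    dsimp only
    rw [Nat.cast_sub hcfloor, sub_add_cancel, natCast_floor_eq_intCast_floor (by positivity),
      gaussMap, Int.floor_add_fract, inv_inv]
  calc volume (Ioc 0 (c : ℝ)⁻¹ ∩ gaussMap ⁻¹' A)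
      ≤ ∑' a : ℕ, volume ((fun t : ℝ => ((a + c : ℝ) + t)⁻¹) '' (A ∩ Ici 0)) :=
        (measure_mono hcover).trans (measure_iUnion_le _)
    _ ≤ ∑' a : ℕ, ENNReal.ofReal ((a + c : ℝ) ^ 2)⁻¹ * volume A := by
        gcongr with a
        exact (volume_image_inv_add_le (by positivity) inter_subset_right).trans
          (by gcongr; exact inter_subset_left)
    _ = (∑' a : ℕ, ENNReal.ofReal ((a + c : ℝ) ^ 2)⁻¹) * volume A := ENNReal.tsum_mul_right

lemma tsum_ofReal_inv_add_sq_le {k : ℕ} (hk : k ≠ 0) :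
    ∑' a : ℕ, ENNReal.ofReal ((a + (k + 1 : ℕ) : ℝ) ^ 2)⁻¹ ≤ ENNReal.ofReal (k : ℝ)⁻¹ := by
  refine ENNReal.tsum_le_of_sum_range_le fun n => ?_
  rw [← ENNReal.ofReal_sum_of_nonneg fun a _ => by positivity]
  refine ENNReal.ofReal_le_ofReal ?_
  have hreindex : ∑ a ∈ Finset.range n, ((a + (k + 1 : ℕ) : ℝ) ^ 2)⁻¹ =
      ∑ i ∈ Finset.Ioc k (n + k), ((i : ℝ) ^ 2)⁻¹ := by
    have := Finset.sum_Ico_add' (fun i : ℕ => ((i : ℝ) ^ 2)⁻¹) 0 n (k + 1)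
    rw [zero_add, ← add_assoc, Finset.Ico_add_one_add_one_eq_Ioc, ← Finset.range_eq_Ico] at this
    rw [← this]
    push_cast
    rfl
  rw [hreindex]
  calc ∑ i ∈ Finset.Ioc k (n + k), ((i : ℝ) ^ 2)⁻¹ ≤ (k : ℝ)⁻¹ - ((n + k : ℕ) : ℝ)⁻¹ :=
        sum_Ioc_inv_sq_le_sub hk (by omega)
    _ ≤ (k : ℝ)⁻¹ := sub_le_self _ (by positivity)

lemma Irrational.gaussMap {x : ℝ} (hx : Irrational x) : Irrational (gaussMap x) :=
  hx.inv.sub_intCast ⌊x⁻¹⌋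

lemma gaussMap_mem_Ioo {x : ℝ} (hx : Irrational x) : gaussMap x ∈ Ioo 0 1 :=
  ⟨(Int.fract_nonneg _).lt_of_ne' hx.gaussMap.ne_zero, Int.fract_lt_one _⟩

lemma gaussMap_iterate_mem_Ioo {x : ℝ} (hx : x ∈ Ioo 0 1) (hirr : Irrational x) (n : ℕ) :
    gaussMap^[n] x ∈ Ioo 0 1 ∧ Irrational (gaussMap^[n] x) := by
  induction n with
  | zero => exact ⟨hx, hirr⟩
  | succ n ih =>
    rw [Function.iterate_succ_apply']
    exact ⟨gaussMap_mem_Ioo ih.2, ih.2.gaussMap⟩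

lemma volume_forall_le_gaussMap_iterate_mem_Ioc_le {k : ℕ} (hk : k ≠ 0) (m : ℕ) :
    volume {x | ∀ n ≤ m, gaussMap^[n] x ∈ Ioc 0 ((k : ℝ) + 1)⁻¹} ≤
      ENNReal.ofReal (k : ℝ)⁻¹ ^ m := by
  induction m with
  | zero =>
    calc volume {x | ∀ n ≤ 0, gaussMap^[n] x ∈ Ioc 0 ((k : ℝ) + 1)⁻¹}
        ≤ volume (Ioc (0 : ℝ) 1) := measure_mono fun x hx => by
          obtain ⟨hx0, hxk⟩ := hx 0 le_rfl
          exact ⟨hx0, hxk.trans (inv_le_one_of_one_le₀ (by simp))⟩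
      _ = ENNReal.ofReal (k : ℝ)⁻¹ ^ 0 := by simp
  | succ m ih =>
    have hsub : {x | ∀ n ≤ m + 1, gaussMap^[n] x ∈ Ioc 0 ((k : ℝ) + 1)⁻¹} ⊆
        Ioc 0 ((k + 1 : ℕ) : ℝ)⁻¹ ∩
          gaussMap ⁻¹' {x | ∀ n ≤ m, gaussMap^[n] x ∈ Ioc 0 ((k : ℝ) + 1)⁻¹} :=
      fun x hx => ⟨by simpa using hx 0 (Nat.zero_le _), fun n hn => by
        simpa only [← Function.iterate_succ_apply] using hx (n + 1) (by omega)⟩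
    calc _ ≤ _ := measure_mono hsub
      _ ≤ _ := volume_Ioc_inter_gaussMap_preimage_le (Nat.succ_pos k) _
      _ ≤ ENNReal.ofReal (k : ℝ)⁻¹ * ENNReal.ofReal (k : ℝ)⁻¹ ^ m :=
        mul_le_mul' (tsum_ofReal_inv_add_sq_le hk) ih
      _ = ENNReal.ofReal (k : ℝ)⁻¹ ^ (m + 1) := (pow_succ' _ _).symm

lemma volume_forall_gaussMap_iterate_mem_Ioc_eq_zero {k : ℕ} (hk : 2 ≤ k) :
    volume {x | ∀ n, gaussMap^[n] x ∈ Ioc 0 ((k : ℝ) + 1)⁻¹} = 0 := by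
  have hlt : ENNReal.ofReal (k : ℝ)⁻¹ < 1 := by
    rw [ENNReal.ofReal_lt_one]
    exact inv_lt_one_of_one_lt₀ (by exact_mod_cast hk)
  refine le_zero_iff.1 (ge_of_tendsto' (ENNReal.tendsto_pow_atTop_nhds_zero_of_lt_one hlt)
    fun m => ?_)
  exact (measure_mono (ofPred_subset_ofPred.2 fun x hx n _ => hx n)).trans
    (volume_forall_le_gaussMap_iterate_mem_Ioc_le (by omega) m)

lemma volume_gaussMap_iterate_preimage_eq_zero {A : Set ℝ} (hA : volume A = 0) (N : ℕ) :
    volume {x | x ∈ Ioo 0 1 ∧ Irrational x ∧ gaussMap^[N] x ∈ A} = 0 := by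
  induction N with
  | zero => exact measure_mono_null (fun x hx => hx.2.2) hA
  | succ N ih =>
    have hsub : {x | x ∈ Ioo 0 1 ∧ Irrational x ∧ gaussMap^[N + 1] x ∈ A} ⊆
        Ioc 0 ((1 : ℕ) : ℝ)⁻¹ ∩
          gaussMap ⁻¹' {x | x ∈ Ioo 0 1 ∧ Irrational x ∧ gaussMap^[N] x ∈ A} :=
      fun x ⟨hx, hirr, hxA⟩ => ⟨by simpa using Ioo_subset_Ioc_self hx,
        gaussMap_mem_Ioo hirr, hirr.gaussMap, hxA⟩
    refine measure_mono_null hsub (le_zero_iff.1 ?_)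
    exact (volume_Ioc_inter_gaussMap_preimage_le one_pos _).trans (by rw [ih, mul_zero])

lemma ae_frequently_lt_gaussMap_iterate :
    ∀ᵐ x ∂(volume.restrict (Ioo (0 : ℝ) 1)), Irrational x →
      ∃ᶠ n in atTop, 3⁻¹ < gaussMap^[n] x := by
  rw [ae_restrict_iff' measurableSet_Ioo, ae_iff]
  have hnull := volume_forall_gaussMap_iterate_mem_Ioc_eq_zero (le_refl 2)
  refine measure_mono_null (fun x hx => ?_) (measure_iUnion_null fun N =>
    volume_gaussMap_iterate_preimage_eq_zero hnull N)
  obtain ⟨hx, hirr, hev⟩ :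
      x ∈ Ioo 0 1 ∧ Irrational x ∧ ∀ᶠ n in atTop, gaussMap^[n] x ≤ 3⁻¹ := by
    simpa only [mem_ofPred_eq, Classical.not_imp, not_frequently, not_lt] using hx
  obtain ⟨N, hN⟩ := eventually_atTop.1 hev
  refine mem_iUnion.2 ⟨N, hx, hirr, fun n => ?_⟩
  rw [← Function.iterate_add_apply]
  exact ⟨(gaussMap_iterate_mem_Ioo hx hirr _).1.1,
    (hN (n + N) (by omega)).trans_eq (by norm_num)⟩

namespace GenContFract

lemma of_s_get?_eq_gaussMap_iterate {v : ℝ} (hv : Irrational v) (n : ℕ) :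
    (GenContFract.of v).s.get? n = some ⟨1, ⌊(gaussMap^[n] (Int.fract v))⁻¹⌋⟩ := by
  induction n generalizing v with
  | zero => exact of_s_head (hv.sub_intCast ⌊v⌋).ne_zero
  | succ n ih =>
    rw [of_s_succ, ih (v := (Int.fract v)⁻¹) (hv.sub_intCast ⌊v⌋).inv,
      Function.iterate_succ_apply]
    rfl

variable {K : Type*} [Field K] [LinearOrder K] [IsStrictOrderedRing K] [FloorRing K]

lemma one_le_of_den {v : K} (n : ℕ) : 1 ≤ (GenContFract.of v).dens n := by
  rw [← zeroth_den_eq_one (g := GenContFract.of v)]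
  exact monotone_nat_of_le_succ (f := (GenContFract.of v).dens) (fun _ => of_den_mono)
    (Nat.zero_le n)

lemma of_dens_div_mem_Icc {v : K} {n : ℕ} {b : K}
    (h : (GenContFract.of v).partDens.get? (n + 1) = some b) :
    (GenContFract.of v).dens (n + 2) / (GenContFract.of v).dens (n + 1) ∈ Icc b (b + 1) := by
  obtain ⟨gp, hs, rfl⟩ := exists_s_b_of_partDen h
  have ha : gp.a = 1 := (of_partNum_eq_one_and_exists_int_partDen_eq hs).1
  have hrec := dens_recurrence hs rfl rfl
  have hpos : 0 < (GenContFract.of v).dens (n + 1) := zero_lt_one.trans_le (one_le_of_den _)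
  rw [mem_Icc, le_div_iff₀ hpos, div_le_iff₀ hpos]
  exact ⟨le_of_succ_get?_den h, by rw [hrec, ha]; linarith [of_den_mono (v := v) (n := n)]⟩

lemma of_dens_div_mem_Icc_one_three {x : ℝ} (hx : x ∈ Ioo 0 1) (hirr : Irrational x) {n : ℕ}
    (hn : 3⁻¹ < gaussMap^[n + 1] x) :
    (GenContFract.of x).dens (n + 2) / (GenContFract.of x).dens (n + 1) ∈ Icc 1 3 := by
  set y := gaussMap^[n + 1] x
  have hs := of_s_get?_eq_gaussMap_iterate hirr (n + 1)
  rw [Int.fract_eq_self.2 ⟨hx.1.le, hx.2⟩] at hs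
  have hb := partDen_eq_s_b hs
  have hy3 : y⁻¹ < 3 := by
    simpa using inv_strictAnti₀ (by norm_num) hn
  have hfloor : (⌊y⁻¹⌋ : ℝ) ≤ 2 := by
    exact_mod_cast Int.lt_add_one_iff.1 (Int.floor_lt.2 (by exact_mod_cast hy3))
  have hI := of_dens_div_mem_Icc hb
  exact ⟨(of_one_le_get?_partDen hb).trans hI.1, hI.2.trans (by linarith)⟩

end GenContFract

lemma summable_one_div_fib_succ : Summable fun n : ℕ => 1 / (Nat.fib (n + 1) : ℝ) := by
  refine summable_of_ratio_test_tendsto_lt_one (l := -goldenConj)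
    (by linarith [neg_one_lt_goldenConj]) (Eventually.of_forall fun n => by simp) ?_
  refine (tendsto_fib_div_fib_succ_atTop.comp (tendsto_add_atTop_nat 1)).congr fun n => ?_
  simp [div_eq_mul_inv, mul_comm]

lemma one_le_recipFibConst : 1 ≤ recipFibConst := by
  simpa [recipFibConst] using summable_one_div_fib_succ.le_tsum 0 fun n _ => by positivity

/-- **Lemma 2.** Given `0 < ε < 1`, for Lebesgue-almost every irrational
`x ∈ (0,1)` there is a strictly increasing sequence `n₁ < n₂ < ⋯` with
`2e^{−2F}/(1+ε) < q_{n_k+1}(x)/q_{n_k}(x) < 2e^{2F}/(1−ε)` for all `k`. -/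
theorem poncelet_stmt9
    (ε : ℝ) (hε0 : 0 < ε) (hε1 : ε < 1) :
    ∀ᵐ x ∂(volume.restrict (Ioo (0 : ℝ) 1)), Irrational x →
      ∃ n : ℕ → ℕ, StrictMono n ∧ ∀ k : ℕ,
        2 * exp (-(2 * recipFibConst)) / (1 + ε) <
            (GenContFract.of x).dens (n k + 1) / (GenContFract.of x).dens (n k) ∧
          (GenContFract.of x).dens (n k + 1) / (GenContFract.of x).dens (n k) <
            2 * exp (2 * recipFibConst) / (1 - ε) := by
  have hexp : 3 ≤ exp (2 * recipFibConst) := by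
    linarith [add_one_le_exp (2 * recipFibConst), one_le_recipFibConst]
  have hlower : 2 * exp (-(2 * recipFibConst)) / (1 + ε) < 1 := by
    rw [div_lt_one (by linarith), exp_neg]
    linarith [(inv_le_inv₀ (by positivity) (by norm_num)).2 hexp]
  have hupper : 3 < 2 * exp (2 * recipFibConst) / (1 - ε) := by
    rw [lt_div_iff₀ (by linarith)]
    nlinarith
  filter_upwards [ae_restrict_mem measurableSet_Ioo, ae_frequently_lt_gaussMap_iterate]
    with x hx hfreq hirr
  rw [← map_add_atTop_eq_nat 1, frequently_map] at hfreq
  obtain ⟨φ, hφ, hratio⟩ := extraction_of_frequently_atTop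
    ((hfreq hirr).mono fun n hn => GenContFract.of_dens_div_mem_Icc_one_three hx hirr hn)
  exact ⟨fun k => φ k + 1, fun a b hab => Nat.add_lt_add_right (hφ hab) 1,
    fun k => ⟨hlower.trans_le (hratio k).1, (hratio k).2.trans_lt hupper⟩⟩
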